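/- arXiv:2006.06514 — 9 statements merged into one kernel-verified Lean document; each statement's English description precedes it below -/
import Mathlib

section
/- Increasing the lookahead window never enlarges the optimistic closed-loop language: for every N ≥ 1, L(G, γ^N_optm) ⊇ L(G, γ^{N+1}_optm). -/
open Set

/-- Prefix closure of a language. -/
def prCl {α : Type*} (L : Set (List α)) : Set (List α) := {s | ∃ t ∈ L, s <+: t}

/-- `M` is controllable w.r.t. the (prefix-closed) language `L` and uncontrollable
events `Suc`: `pr(M)·Σ_uc ∩ L ⊆ pr(M)`. -/
def ctrb {α : Type*} (M L : Set (List α)) (Suc : Set α) : Prop :=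
  ∀ s ∈ prCl M, ∀ σ ∈ Suc, s ++ [σ] ∈ L → s ++ [σ] ∈ prCl M

/-- Supremal controllable sublanguage of `K` w.r.t. `L` and `Suc`:
the union of all controllable sublanguages of `K`. -/
def supC {α : Type*} (K L : Set (List α)) (Suc : Set α) : Set (List α) :=
  ⋃₀ {M | M ⊆ K ∧ ctrb M L Suc}

/-- Post-language of `L` after `s`: `L/s = {t : st ∈ L}`. -/
def postL {α : Type*} (L : Set (List α)) (s : List α) : Set (List α) := {t | s ++ t ∈ L}

/-- Truncation of `L` to strings of length at most `N`. -/
def truncL {α : Type*} (L : Set (List α)) (N : ℕ) : Set (List α) := {t ∈ L | t.length ≤ N}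

/-- Active set of `L` after `s`. -/
def activeSet {α : Type*} (L : Set (List α)) (s : List α) : Set α := {σ | s ++ [σ] ∈ L}

/-- The closed-loop language `L(G,γ)`, defined inductively:
`ε ∈ L(G,γ)`, and `sσ ∈ L(G,γ)` iff `s ∈ L(G,γ)`, `sσ ∈ L(G)` and `σ ∈ γ(s)`. -/
inductive InLoop {α : Type*} (L : Set (List α)) (γ : List α → Set α) : List α → Prop
  | nil : InLoop L γ []
  | snoc {s : List α} {σ : α} : InLoop L γ s → (s ++ [σ]) ∈ L → σ ∈ γ s →
      InLoop L γ (s ++ [σ])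

/-- The closed-loop language as a set. -/
def loopLang {α : Type*} (L : Set (List α)) (γ : List α → Set α) : Set (List α) :=
  {s | InLoop L γ s}

/-- The `N`-step conservative LLP decision
`f^N_cons(s) = (K/s|_{N-1})^{↑/s|_N}`. -/
def fCons {α : Type*} (K L : Set (List α)) (Suc : Set α) (N : ℕ) (s : List α) :
    Set (List α) :=
  supC (truncL (postL K s) (N - 1)) (truncL (postL L s) N) Suc

/-- The `N`-step optimistic LLP decision
`f^N_optm(s) = (K/s|_N ∪ (pr(K)/s|_N \ pr(K)/s|_{N-1}))^{↑/s|_N}`. -/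
def fOptm {α : Type*} (K L : Set (List α)) (Suc : Set α) (N : ℕ) (s : List α) :
    Set (List α) :=
  supC (truncL (postL K s) N ∪
        (truncL (postL (prCl K) s) N \ truncL (postL (prCl K) s) (N - 1)))
       (truncL (postL L s) N) Suc

/-- The LLP control policy `γ(s) = pr(f(s))|_1 ∪ (Σ_uc ∩ Σ_{L(G)}(s))`,
viewed as the set of enabled events. -/
def policy {α : Type*} (f : List α → Set (List α)) (L : Set (List α)) (Suc : Set α)
    (s : List α) : Set α :=
  {σ | [σ] ∈ prCl (f s)} ∪ (Suc ∩ activeSet L s)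

/-- The conservative LLP control policy `γ^N_cons`. -/
def γCons {α : Type*} (K L : Set (List α)) (Suc : Set α) (N : ℕ) : List α → Set α :=
  policy (fCons K L Suc N) L Suc

/-- The optimistic LLP control policy `γ^N_optm`. -/
def γOptm {α : Type*} (K L : Set (List α)) (Suc : Set α) (N : ℕ) : List α → Set α :=
  policy (fOptm K L Suc N) L Suc

lemma prCl_of_prefix' {α : Type*} {M : Set (List α)} {u v : List α}
    (h : u <+: v) (hv : v ∈ prCl M) : u ∈ prCl M := by
  obtain ⟨w, hw, hvw⟩ := hv
  exact ⟨w, hw, h.trans hvw⟩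

lemma fOptm_step {α : Type*} (K L : Set (List α)) (Suc : Set α) {N : ℕ} (hN : 1 ≤ N)
    (s : List α) (σ : α) (h : [σ] ∈ prCl (fOptm K L Suc (N + 1) s)) :
    [σ] ∈ prCl (fOptm K L Suc N s) := by
  obtain ⟨t, ht, hpre⟩ := h
  obtain ⟨M, ⟨hMA, hMc⟩, htM⟩ := ht
  set M' : Set (List α) :=
    truncL M N ∪ {u | u ∈ prCl M ∧ u.length = N} with hM'def
  have hMpr : M ⊆ postL (prCl K) s := by
    intro x hx
    rcases hMA hx with hx1 | hx2
    · exact ⟨s ++ x, hx1.1, List.prefix_refl _⟩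
    · exact hx2.1.1
  have hprMpr : prCl M ⊆ postL (prCl K) s := by
    rintro u ⟨v, hv, r, rfl⟩
    obtain ⟨w, hw, hvw⟩ := hMpr hv
    have h1 : s ++ u <+: s ++ (u ++ r) := ⟨r, by simp⟩
    exact ⟨w, hw, h1.trans hvw⟩
  have hprM' : prCl M' ⊆ prCl M := by
    rintro u ⟨v, hv, huv⟩
    rcases hv with hv | hv
    · exact ⟨v, hv.1, huv⟩
    · exact prCl_of_prefix' huv hv.1
  -- M' is a subset of the window-N language
  have hsub : M' ⊆ truncL (postL K s) N ∪
      (truncL (postL (prCl K) s) N \ truncL (postL (prCl K) s) (N - 1)) := by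
    rintro u (⟨hu, hlen⟩ | ⟨hu, hlen⟩)
    · rcases hMA hu with h1 | h2
      · exact Or.inl ⟨h1.1, hlen⟩
      · exact absurd ⟨h2.1.1, hlen⟩ h2.2
    · refine Or.inr ⟨⟨hprMpr hu, le_of_eq hlen⟩, fun hc => ?_⟩
      have := hc.2
      omega
  -- M' is controllable w.r.t. the window-N plant language
  have hctrb : ctrb M' (truncL (postL L s) N) Suc := by
    intro u hu τ hτ hstep
    have huM : u ∈ prCl M := hprM' hu
    have hstep' : u ++ [τ] ∈ truncL (postL L s) (N + 1) :=
      ⟨hstep.1, le_trans hstep.2 (Nat.le_succ N)⟩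
    obtain ⟨w, hwM, hpw⟩ := hMc u huM τ hτ hstep'
    by_cases hlw : w.length ≤ N
    · exact ⟨w, Or.inl ⟨hwM, hlw⟩, hpw⟩
    · refine ⟨w.take N, Or.inr ⟨⟨w, hwM, List.take_prefix _ _⟩, by
        simp [List.length_take]; omega⟩, ?_⟩
      rw [List.prefix_take_iff]
      exact ⟨hpw, hstep.2⟩
  -- find a witness for [σ]
  have hwit : [σ] ∈ prCl M' := by
    by_cases hlt : t.length ≤ N
    · exact ⟨t, Or.inl ⟨htM, hlt⟩, hpre⟩
    · refine ⟨t.take N, Or.inr ⟨⟨t, htM, List.take_prefix _ _⟩, by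
        simp [List.length_take]; omega⟩, ?_⟩
      rw [List.prefix_take_iff]
      refine ⟨hpre, ?_⟩
      simpa using hN
  obtain ⟨t', ht', hpre'⟩ := hwit
  exact ⟨t', ⟨M', ⟨hsub, hctrb⟩, ht'⟩, hpre'⟩

/-- `L(G, γ^N_optm) ⊇ L(G, γ^{N+1}_optm)` for every `N ≥ 1`. -/
theorem optm_language_antitone {α : Type*} [Fintype α]
    (Sc Suc : Set α) (hpart : Sc ∪ Suc = Set.univ) (hdisj : Disjoint Sc Suc)
    (LG Lm K : Set (List α)) (hLG : LG = prCl Lm)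
    (hKm : K ⊆ Lm) (hKcl : K = prCl K ∩ Lm)
    (N : ℕ) (hN : 1 ≤ N) :
    loopLang LG (γOptm K LG Suc (N + 1)) ⊆ loopLang LG (γOptm K LG Suc N) := by
  intro s hs
  induction hs with
  | nil => exact InLoop.nil
  | snoc hs hL hγ ih =>
    refine InLoop.snoc ih hL ?_
    rcases hγ with h1 | h2
    · exact Or.inl (fOptm_step K LG Suc hN _ _ h1)
    · exact Or.inr h2
end

section
/- Increasing the lookahead window never shrinks the conservative closed-loop language: for every N ≥ 1, L(G, γ^{N+1}_cons) ⊇ L(G, γ^N_cons). -/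
open Set

/-- `L(G, γ^{N+1}_cons) ⊇ L(G, γ^N_cons)` for every `N ≥ 1`. -/
theorem cons_language_monotone {α : Type*} [Fintype α]
    (Sc Suc : Set α) (hpart : Sc ∪ Suc = Set.univ) (hdisj : Disjoint Sc Suc)
    (LG Lm K : Set (List α)) (hLG : LG = prCl Lm)
    (hKm : K ⊆ Lm) (hKcl : K = prCl K ∩ Lm)
    (N : ℕ) (hN : 1 ≤ N) :
    loopLang LG (γCons K LG Suc N) ⊆ loopLang LG (γCons K LG Suc (N + 1)) := by
  -- Step 1: fCons N s ⊆ fCons (N+1) s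
  have hf : ∀ s, fCons K LG Suc N s ⊆ fCons K LG Suc (N + 1) s := by
    intro s x hx
    obtain ⟨M, ⟨hMK, hMc⟩, hxM⟩ := hx
    refine ⟨M, ⟨?_, ?_⟩, hxM⟩
    · intro y hy
      obtain ⟨hy1, hy2⟩ := hMK hy
      exact ⟨hy1, by omega⟩
    · intro t ht σ hσ htσ
      obtain ⟨u, huM, hpre⟩ := ht
      have hlen : t.length ≤ N - 1 := le_trans hpre.length_le (hMK huM).2
      obtain ⟨htσ1, _⟩ := htσ
      exact hMc t ⟨u, huM, hpre⟩ σ hσ ⟨htσ1, by simp; omega⟩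
  -- Step 2: policy monotone
  have hγ : ∀ s, γCons K LG Suc N s ⊆ γCons K LG Suc (N + 1) s := by
    intro s σ hσ
    rcases hσ with h | h
    · left
      obtain ⟨t, htf, hpre⟩ := h
      exact ⟨t, hf s htf, hpre⟩
    · right; exact h
  -- Step 3: loopLang monotone
  intro s hs
  induction hs with
  | nil => exact InLoop.nil
  | snoc hs' hL hγs ih => exact InLoop.snoc ih hL (hγ _ hγs)
end

section
/- For every trace s ∈ Σ* and every N ≥ 1, the conservative LLP decisions satisfy f^N_cons(s) ⊆ f^{N+1}_cons(s). -/
open Set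

/-- `f^N_cons(s) ⊆ f^{N+1}_cons(s)` for every trace `s` and `N ≥ 1`. -/
theorem fcons_monotone {α : Type*} [Fintype α]
    (Sc Suc : Set α) (hpart : Sc ∪ Suc = Set.univ) (hdisj : Disjoint Sc Suc)
    (LG Lm K : Set (List α)) (hLG : LG = prCl Lm)
    (hKm : K ⊆ Lm) (hKcl : K = prCl K ∩ Lm)
    (N : ℕ) (hN : 1 ≤ N) (s : List α) :
    fCons K LG Suc N s ⊆ fCons K LG Suc (N + 1) s := by
  rintro t ⟨M, ⟨hMK, hMc⟩, htM⟩
  refine ⟨M, ⟨?_, ?_⟩, htM⟩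
  · intro u hu
    obtain ⟨h1, h2⟩ := hMK hu
    exact ⟨h1, h2.trans (by omega)⟩
  · intro u hu σ hσ hmem
    obtain ⟨v, hvM, hpre⟩ := hu
    have hlen : u.length ≤ N - 1 := hpre.length_le.trans (hMK hvM).2
    refine hMc u ⟨v, hvM, hpre⟩ σ hσ ⟨hmem.1, ?_⟩
    simp only [List.length_append, List.length_singleton]
    omega
end

section
/- For every trace s ∈ Σ* and all window sizes N, M ≥ 1, the one-step decisions of the conservative and optimistic attitudes satisfy pr(f^M_cons(s))|_1 ⊆ pr(f^N_optm(s))|_1. -/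
open Set

/-- `pr(f^M_cons(s))|_1 ⊆ pr(f^N_optm(s))|_1` for all `s` and all
window sizes `N, M ≥ 1`. -/
theorem compare_one_step {α : Type*} [Fintype α]
    (Sc Suc : Set α) (hpart : Sc ∪ Suc = Set.univ) (hdisj : Disjoint Sc Suc)
    (LG Lm K : Set (List α)) (hLG : LG = prCl Lm)
    (hKm : K ⊆ Lm) (hKcl : K = prCl K ∩ Lm)
    (N M : ℕ) (hN : 1 ≤ N) (hM : 1 ≤ M) (s : List α) :
    truncL (prCl (fCons K LG Suc M s)) 1 ⊆ truncL (prCl (fOptm K LG Suc N s)) 1 := by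
  rintro x ⟨⟨t, ht, hxt⟩, hxlen⟩
  obtain ⟨M', ⟨hM'K, hM'c⟩, htM'⟩ := ht
  -- elements of M' lie in K/s with length ≤ M-1
  have hM'len : ∀ v ∈ M', v.length ≤ M - 1 ∧ s ++ v ∈ K := by
    intro v hv
    obtain ⟨hv1, hv2⟩ := hM'K hv
    exact ⟨hv2, hv1⟩
  -- the candidate controllable sublanguage for the optimistic decision
  set M'' : Set (List α) :=
    {u | u ∈ prCl M' ∧ u.length ≤ N ∧ (u.length = N ∨ s ++ u ∈ K)} with hM''def
  have hsub : M'' ⊆ truncL (postL K s) N ∪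
      (truncL (postL (prCl K) s) N \ truncL (postL (prCl K) s) (N - 1)) := by
    rintro u ⟨⟨v, hv, huv⟩, hulen, hcase⟩
    rcases hcase with heq | hK
    · right
      have hK' : s ++ u ∈ prCl K := by
        obtain ⟨r, hr⟩ := huv
        exact ⟨s ++ v, (hM'len v hv).2, r, by rw [← hr, List.append_assoc]⟩
      refine ⟨⟨hK', hulen⟩, ?_⟩
      rintro ⟨_, hle⟩
      omega
    · left; exact ⟨hK, hulen⟩
  have hprM'' : ∀ u ∈ prCl M'', u ∈ prCl M' ∧ u.length ≤ N := by
    rintro u ⟨w, ⟨⟨v, hv, hwv⟩, hwlen, _⟩, huw⟩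
    exact ⟨⟨v, hv, huw.trans hwv⟩, le_trans (huw.length_le) hwlen⟩
  -- key: truncate elements of M' into M''
  have htrunc : ∀ v ∈ M', ∀ u : List α, u <+: v → u.length ≤ N →
      ∃ w ∈ M'', u <+: w := by
    intro v hv u huv hulen
    by_cases hvn : v.length ≤ N
    · refine ⟨v, ⟨⟨v, hv, List.prefix_refl v⟩, hvn, Or.inr (hM'len v hv).2⟩, huv⟩
    · refine ⟨v.take N, ⟨⟨v, hv, List.take_prefix N v⟩, ?_, Or.inl ?_⟩, ?_⟩
      · simp only [List.length_take]; omega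
      · simp only [List.length_take]; omega
      · rw [List.prefix_take_iff]
        exact ⟨huv, hulen⟩
  have hctrb : ctrb M'' (truncL (postL LG s) N) Suc := by
    rintro u hu σ hσ ⟨hmem, hlen⟩
    have huM' := (hprM'' u hu).1
    -- u has length ≤ M - 1
    obtain ⟨v0, hv0, huv0⟩ := (hprM'' u hu).1
    have hulenM : u.length ≤ M - 1 := le_trans huv0.length_le (hM'len v0 hv0).1
    have hstep : u ++ [σ] ∈ prCl M' := by
      refine hM'c u huM' σ hσ ⟨hmem, ?_⟩
      simp; omega
    obtain ⟨v, hv, hv'⟩ := hstep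
    simp only [List.length_append, List.length_singleton] at hlen
    obtain ⟨w, hw, hw'⟩ := htrunc v hv (u ++ [σ]) hv' (by simpa using hlen)
    exact ⟨w, hw, hw'⟩
  -- conclude
  have hxN : x.length ≤ N := le_trans hxlen hN
  obtain ⟨w, hw, hxw⟩ := htrunc t htM' x hxt hxN
  exact ⟨⟨w, ⟨M'', ⟨hsub, hctrb⟩, hw⟩, hxw⟩, hxlen⟩
end

section
/- For all window sizes N, M ≥ 1, the conservative closed-loop language is contained in the optimistic closed-loop language: L(G, γ^M_cons) ⊆ L(G, γ^N_optm). -/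
open Set

/-- `L(G, γ^M_cons) ⊆ L(G, γ^N_optm)` for all `N, M ≥ 1`. -/
theorem compare_languages {α : Type*} [Fintype α]
    (Sc Suc : Set α) (hpart : Sc ∪ Suc = Set.univ) (hdisj : Disjoint Sc Suc)
    (LG Lm K : Set (List α)) (hLG : LG = prCl Lm)
    (hKm : K ⊆ Lm) (hKcl : K = prCl K ∩ Lm)
    (N M : ℕ) (hN : 1 ≤ N) (hM : 1 ≤ M) :
    loopLang LG (γCons K LG Suc M) ⊆ loopLang LG (γOptm K LG Suc N) := by
  have key : ∀ s, γCons K LG Suc M s ⊆ γOptm K LG Suc N s := by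
    intro s σ hσ
    rcases hσ with h | h
    · left
      obtain ⟨u, hu, hpre⟩ := h
      obtain ⟨M', ⟨hM'sub, hM'ctrb⟩, huM'⟩ := hu
      -- the candidate controllable set for the optimistic decision
      set D : Set (List α) :=
        (M' ∩ {t | t.length ≤ N}) ∪ {t | t ∈ prCl M' ∧ t.length = N} with hD
      have hlen : ∀ t ∈ prCl M', t.length ≤ M - 1 := by
        rintro t ⟨m, hm, hpm⟩
        exact le_trans hpm.length_le (hM'sub hm).2
      have hprD_sub : prCl D ⊆ prCl M' := by
        rintro t ⟨d, hd, htd⟩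
        rcases hd with ⟨hd1, _⟩ | ⟨⟨m, hm, hdm⟩, _⟩
        · exact ⟨d, hd1, htd⟩
        · exact ⟨m, hm, htd.trans hdm⟩
      have hprD_sup : ∀ t ∈ prCl M', t.length ≤ N → t ∈ prCl D := by
        rintro t ⟨m, hm, htm⟩ htN
        by_cases hmN : m.length ≤ N
        · exact ⟨m, Or.inl ⟨hm, hmN⟩, htm⟩
        · refine ⟨m.take N, Or.inr ⟨⟨m, hm, List.take_prefix _ _⟩, ?_⟩, ?_⟩
          · simp [List.length_take]
            omega
          · rw [List.prefix_take_iff]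
            exact ⟨htm, htN⟩
      have hDsub : D ⊆ truncL (postL K s) N ∪
          (truncL (postL (prCl K) s) N \ truncL (postL (prCl K) s) (N - 1)) := by
        rintro t (⟨htM', htN⟩ | ⟨⟨m, hm, htm⟩, htN⟩)
        · exact Or.inl ⟨(hM'sub htM').1, htN⟩
        · refine Or.inr ⟨⟨⟨s ++ m, (hM'sub hm).1, ?_⟩, htN.le⟩, ?_⟩
          · obtain ⟨r, hr⟩ := htm
            exact ⟨r, by rw [← hr, List.append_assoc]⟩
          · rintro ⟨_, hle⟩
            omega
      have hDctrb : ctrb D (truncL (postL LG s) N) Suc := by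
        intro t ht σ' hσ' hmem
        obtain ⟨hLGmem, hlenN⟩ := hmem
        have htM' : t ∈ prCl M' := hprD_sub ht
        have h1 : t.length ≤ M - 1 := hlen t htM'
        have h2 : t ++ [σ'] ∈ truncL (postL LG s) M :=
          ⟨hLGmem, by simp; omega⟩
        have h3 := hM'ctrb t htM' σ' hσ' h2
        have h4 : (t ++ [σ']).length ≤ N := hlenN
        exact hprD_sup _ h3 h4
      have hDf : D ⊆ fOptm K LG Suc N s :=
        Set.subset_sUnion_of_mem ⟨hDsub, hDctrb⟩
      have hσD : [σ] ∈ prCl D := by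
        refine hprD_sup [σ] ⟨u, huM', hpre⟩ (by simpa using hN)
      obtain ⟨d, hdD, hσd⟩ := hσD
      exact ⟨d, hDf hdD, hσd⟩
    · exact Or.inr h
  intro s hs
  induction hs with
  | nil => exact InLoop.nil
  | snoc hs hLG hγ ih => exact InLoop.snoc ih hLG (key _ hγ)
end

section
/- Suppose the legal language is prefix-closed, K = pr(K), there is no starting error in L(G, γ^N_cons) (i.e. f^N_cons(ε) ≠ ∅), and N_u(K) exists. If N ≥ N_u(K) + 2, then the conservative LLP supervisor is valid: L(G, γ^N_cons) = pr(K↑). -/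
open Set

/-- The set of lengths of subtraces of uncontrollable events occurring in `L`;
`N_u(L)` is its greatest element, when it exists. -/
def uncLens {α : Type*} (Suc : Set α) (L : Set (List α)) : Set ℕ :=
  {n | ∃ t : List α, t.length = n ∧ (∀ σ ∈ t, σ ∈ Suc) ∧ ∃ u v : List α, u ++ t ++ v ∈ L}

lemma prefix_append_left {α : Type*} (s : List α) {t m : List α} (h : t <+: m) :
    s ++ t <+: s ++ m := by
  rcases h with ⟨r, rfl⟩
  exact ⟨r, by rw [List.append_assoc]⟩

lemma prefix_split {α : Type*} {w w₀ u : List α} (h : w <+: w₀ ++ u) :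
    w <+: w₀ ∨ ∃ u', u' <+: u ∧ w = w₀ ++ u' := by
  rcases le_or_gt w.length w₀.length with hle | hlt
  · left
    exact List.prefix_of_prefix_length_le h (List.prefix_append w₀ u) hle
  · right
    have hw₀w : w₀ <+: w :=
      List.prefix_of_prefix_length_le (List.prefix_append w₀ u) h hlt.le
    rcases hw₀w with ⟨u', rfl⟩
    refine ⟨u', ?_, rfl⟩
    rcases h with ⟨r, hr⟩
    rw [List.append_assoc] at hr
    exact ⟨r, List.append_cancel_left hr⟩

/-- Case I (`K = pr(K)`), conservative attitude. If there is no
starting error and `N ≥ N_u(K) + 2`, then `L(G, γ^N_cons) = pr(K↑)`. -/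
theorem cons_valid_caseI {α : Type*} [Fintype α]
    (Sc Suc : Set α) (hpart : Sc ∪ Suc = Set.univ) (hdisj : Disjoint Sc Suc)
    (LG Lm K : Set (List α)) (hLG : LG = prCl Lm)
    (hKm : K ⊆ Lm) (hKcl : K = prCl K ∩ Lm)
    (hKpr : K = prCl K)
    (N : ℕ)
    (hstart : fCons K LG Suc N ([] : List α) ≠ ∅)
    (h : ∃ n, IsGreatest (uncLens Suc K) n ∧ n + 2 ≤ N) :
    loopLang LG (γCons K LG Suc N) = prCl (supC K LG Suc) := by
  obtain ⟨n, ⟨hnmem, hub⟩, hnN⟩ := h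
  have hN1 : 1 ≤ N := by omega
  -- basic prefix-closedness facts
  have hKpc : ∀ {w t : List α}, w <+: t → t ∈ K → w ∈ K := by
    intro w t hwt ht
    rw [hKpr]; exact ⟨t, ht, hwt⟩
  have hLGpc : ∀ {w t : List α}, w <+: t → t ∈ LG → w ∈ LG := by
    subst hLG
    rintro w t hwt ⟨m, hm, htm⟩
    exact ⟨m, hm, hwt.trans htm⟩
  have hKLG : K ⊆ LG := by
    subst hLG
    intro t ht
    exact ⟨t, hKm ht, List.prefix_refl t⟩
  have hKupK : supC K LG Suc ⊆ K := by
    rintro t ⟨M, ⟨hMK, _⟩, htM⟩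
    exact hMK htM
  -- the prefix closure of a controllable sublanguage is in the family
  have hfam : ∀ M : Set (List α), M ⊆ K → ctrb M LG Suc →
      prCl M ∈ {M : Set (List α) | M ⊆ K ∧ ctrb M LG Suc} := by
    intro M hMK hMc
    have hred : ∀ {x : List α}, x ∈ prCl (prCl M) → x ∈ prCl M := by
      rintro x ⟨t, ⟨t', ht', htt'⟩, hxt⟩
      exact ⟨t', ht', hxt.trans htt'⟩
    constructor
    · rintro w ⟨t, htM, hwt⟩
      exact hKpc hwt (hMK htM)
    · intro s hs σ hσ hsσ
      have hs' : s ∈ prCl M := hred hs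
      have := hMc s hs' σ hσ hsσ
      exact ⟨s ++ [σ], this, List.prefix_refl _⟩
  have hKuppc : ∀ {w t : List α}, w <+: t → t ∈ supC K LG Suc → w ∈ supC K LG Suc := by
    rintro w t hwt ⟨M, ⟨hMK, hMc⟩, htM⟩
    exact ⟨prCl M, hfam M hMK hMc, ⟨t, htM, hwt⟩⟩
  have hKupCtrl : ∀ s ∈ supC K LG Suc, ∀ σ ∈ Suc, s ++ [σ] ∈ LG →
      s ++ [σ] ∈ supC K LG Suc := by
    rintro s ⟨M, ⟨hMK, hMc⟩, hsM⟩ σ hσ hsLG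
    have := hMc s ⟨s, hsM, List.prefix_refl _⟩ σ hσ hsLG
    exact ⟨prCl M, hfam M hMK hMc, this⟩
  -- gluing lemma: a local controllable sublanguage after s extends Kup
  have key : ∀ (s : List α) (M : Set (List α)),
      (∀ w, w <+: s → w = s ∨ w ∈ supC K LG Suc) →
      M ⊆ truncL (postL K s) (N - 1) → ctrb M (truncL (postL LG s) N) Suc →
      ∀ t ∈ prCl M, s ++ t ∈ supC K LG Suc := by
    intro s M hpre hMK hMc t htM
    -- facts about prCl M
    have hlen : ∀ {t : List α}, t ∈ prCl M → t.length ≤ N - 1 := by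
      rintro t ⟨m, hm, htm⟩
      exact le_trans (htm.length_le) (hMK hm).2
    have happ : ∀ {t m : List α}, t <+: m → s ++ t <+: s ++ m := by
      rintro t m ⟨r, rfl⟩
      exact ⟨r, by rw [List.append_assoc]⟩
    have hinK : ∀ {t : List α}, t ∈ prCl M → s ++ t ∈ K := by
      rintro t ⟨m, hm, htm⟩
      exact hKpc (happ htm) (hMK hm).1
    have hprClM : ∀ {t' t : List α}, t' <+: t → t ∈ prCl M → t' ∈ prCl M := by
      rintro t' t ht't ⟨m, hm, htm⟩
      exact ⟨m, hm, ht't.trans htm⟩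
    -- the glued language
    set M' : Set (List α) :=
      supC K LG Suc ∪ {w | ∃ t ∈ prCl M, w = s ++ t} with hM'def
    have hnil : ([] : List α) ∈ prCl M := hprClM (List.nil_prefix) htM
    have hM'K : M' ⊆ K := by
      rintro w (hw | ⟨t, htM', rfl⟩)
      · exact hKupK hw
      · exact hinK htM'
    have hM'pc : ∀ {w v : List α}, w <+: v → v ∈ M' → w ∈ M' := by
      rintro w v hwv (hv | ⟨t, htM', rfl⟩)
      · exact Or.inl (hKuppc hwv hv)
      · rcases prefix_split hwv with hws | ⟨t', ht't, rfl⟩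
        · rcases hpre w hws with rfl | hwKup
          · exact Or.inr ⟨[], hnil, (List.append_nil w).symm⟩
          · exact Or.inl hwKup
        · exact Or.inr ⟨t', hprClM ht't htM', rfl⟩
    have hM'ctrb : ctrb M' LG Suc := by
      rintro w ⟨v, hvM', hwv⟩ σ hσ hwσLG
      have hwM' : w ∈ M' := hM'pc hwv hvM'
      rcases hwM' with hwKup | ⟨t, htM', rfl⟩
      · exact ⟨_, Or.inl (hKupCtrl w hwKup σ hσ hwσLG), List.prefix_refl _⟩
      · have htlen : t.length ≤ N - 1 := hlen htM'
        have htσ : t ++ [σ] ∈ truncL (postL LG s) N := by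
          refine ⟨?_, ?_⟩
          · show s ++ (t ++ [σ]) ∈ LG
            rw [← List.append_assoc]; exact hwσLG
          · simp only [List.length_append, List.length_singleton]
            omega
        have := hMc t htM' σ hσ htσ
        refine ⟨s ++ (t ++ [σ]), Or.inr ⟨t ++ [σ], this, rfl⟩, ?_⟩
        rw [← List.append_assoc]
    exact ⟨M', ⟨hM'K, hM'ctrb⟩, Or.inr ⟨t, htM, rfl⟩⟩
  -- Claim B: if t++[σ] ∈ Kup then σ is enabled by the conservative decision at t
  have claimB : ∀ (t : List α) (σ : α), t ++ [σ] ∈ supC K LG Suc →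
      [σ] ∈ fCons K LG Suc N t := by
    intro t σ hts
    set M : Set (List α) :=
      {w | t ++ w ∈ supC K LG Suc ∧
        ∃ w₀ u : List α, w = w₀ ++ u ∧ w₀.length + n + 1 ≤ N ∧ ∀ a ∈ u, a ∈ Suc}
      with hMdef
    have hulen : ∀ (w₀ u : List α), (∀ a ∈ u, a ∈ Suc) → t ++ (w₀ ++ u) ∈ K →
        u.length ≤ n := by
      intro w₀ u hu hK'
      refine hub ⟨u, rfl, hu, t ++ w₀, [], ?_⟩
      simp only [List.append_nil, List.append_assoc]
      exact hK'
    have hMsub : M ⊆ truncL (postL K t) (N - 1) := by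
      rintro w ⟨hwKup, w₀, u, rfl, hw₀, hu⟩
      have hK' : t ++ (w₀ ++ u) ∈ K := hKupK hwKup
      have hun : u.length ≤ n := hulen w₀ u hu hK'
      refine ⟨hK', ?_⟩
      simp only [List.length_append]
      omega
    have hMpc : ∀ {w' w : List α}, w' <+: w → w ∈ M → w' ∈ M := by
      rintro w' w hw'w ⟨hwKup, w₀, u, rfl, hw₀, hu⟩
      have htw : t ++ w' <+: t ++ (w₀ ++ u) := prefix_append_left t hw'w
      refine ⟨hKuppc htw hwKup, ?_⟩
      rcases prefix_split hw'w with hw's | ⟨u', hu'u, rfl⟩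
      · refine ⟨w', [], (List.append_nil w').symm, ?_, by simp⟩
        have := hw's.length_le
        omega
      · exact ⟨w₀, u', rfl, hw₀, fun a ha => hu a (hu'u.subset ha)⟩
    have hMctrb : ctrb M (truncL (postL LG t) N) Suc := by
      rintro w ⟨v, hvM, hwv⟩ σ' hσ' hwσ'
      have hwM : w ∈ M := hMpc hwv hvM
      obtain ⟨hwKup, w₀, u, rfl, hw₀, hu⟩ := hwM
      have hLG' : (t ++ (w₀ ++ u)) ++ [σ'] ∈ LG := by
        have : t ++ ((w₀ ++ u) ++ [σ']) ∈ LG := hwσ'.1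
        rwa [← List.append_assoc] at this
      have hKup' : (t ++ (w₀ ++ u)) ++ [σ'] ∈ supC K LG Suc :=
        hKupCtrl _ hwKup σ' hσ' hLG'
      have : (w₀ ++ u) ++ [σ'] ∈ M := by
        refine ⟨by rwa [List.append_assoc] at hKup', w₀, u ++ [σ'], by
          rw [List.append_assoc], hw₀, ?_⟩
        intro a ha
        rcases List.mem_append.mp ha with ha | ha
        · exact hu a ha
        · rw [List.mem_singleton] at ha; subst ha; exact hσ'
      exact ⟨_, this, List.prefix_refl _⟩
    have hσM : [σ] ∈ M := by
      refine ⟨hts, [σ], [], (List.append_nil _).symm, ?_, by simp⟩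
      simp only [List.length_singleton]
      omega
    exact ⟨M, ⟨hMsub, hMctrb⟩, hσM⟩
  -- prCl Kup = Kup
  have hprKup : prCl (supC K LG Suc) = supC K LG Suc := by
    ext w
    constructor
    · rintro ⟨t, ht, hwt⟩
      exact hKuppc hwt ht
    · intro hw
      exact ⟨w, hw, List.prefix_refl _⟩
  rw [hprKup]
  ext s
  constructor
  · -- loop ⊆ Kup
    intro hs
    induction hs with
    | nil =>
      obtain ⟨m, hm⟩ := Set.nonempty_iff_ne_empty.mpr hstart
      obtain ⟨M, ⟨hMsub, hMc⟩, hmM⟩ := hm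
      have := key [] M (fun w hw => Or.inl (List.prefix_nil.mp hw)) hMsub hMc
        [] ⟨m, hmM, List.nil_prefix⟩
      simpa using this
    | snoc hs' hsLG hσγ ih =>
      rcases hσγ with hen | ⟨hσSuc, hact⟩
      · obtain ⟨m, hmF, hpre⟩ := hen
        obtain ⟨M, ⟨hMsub, hMc⟩, hmM⟩ := hmF
        exact key _ M (fun w hw => Or.inr (hKuppc hw ih)) hMsub hMc
          [_] ⟨m, hmM, hpre⟩
      · exact hKupCtrl _ ih _ hσSuc hact
  · -- Kup ⊆ loop
    have main : ∀ w : List α, w ∈ supC K LG Suc → InLoop LG (γCons K LG Suc N) w := by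
      intro w
      induction w using List.reverseRecOn with
      | nil => exact fun _ => InLoop.nil
      | append_singleton t σ ih =>
        intro hs
        have htKup : t ∈ supC K LG Suc := hKuppc ⟨[σ], rfl⟩ hs
        refine InLoop.snoc (ih htKup) (hKLG (hKupK hs)) ?_
        exact Or.inl ⟨[σ], claimB t σ hs, List.prefix_refl _⟩
    exact main s
end

section
/- Suppose the legal language is prefix-closed, K = pr(K), there is no starting error in L(G, γ^N_cons) (i.e. f^N_cons(ε) ≠ ∅), and N_u(L(G)) exists. If N ≥ N_u(L(G)) + 2, then the conservative LLP supervisor is valid: L(G, γ^N_cons) = pr(K↑). -/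
open Set

/-! For prefix-closed `K ⊆ L(G)`, a string lies in `K↑` iff it lies in `K` and no uncontrollable
continuation of any of its prefixes leaves `K` inside `L(G)`. Since uncontrollable runs have length
at most `N_u`, a window of `N ≥ N_u + 2` steps sees all uncontrollable continuations of `s` and of
`sσ`, so for `s ∈ K↑` we have `[σ] ∈ f^N_cons(s)` exactly when `sσ ∈ K↑`; the truncation to
`N - 1` in `K/s` costs the extra step. Induction along the closed loop then identifies
`L(G, γ^N_cons)` with `K↑`, which is prefix-closed; the absence of a starting error is what puts
`ε` into `K↑`. -/

section

variable {α : Type*}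

def IsPrefixClosed (L : Set (List α)) : Prop := ∀ ⦃s t : List α⦄, s <+: t → t ∈ L → s ∈ L

def UcSafe (K L : Set (List α)) (Suc : Set α) (u : List α) : Prop :=
  ∀ w : List α, (∀ σ ∈ w, σ ∈ Suc) → u ++ w ∈ L → u ++ w ∈ K

theorem isPrefixClosed_prCl (L : Set (List α)) : IsPrefixClosed (prCl L) := by
  rintro s t hst ⟨u, hu, htu⟩
  exact ⟨u, hu, hst.trans htu⟩

theorem IsPrefixClosed.prCl_eq {L : Set (List α)} (hL : IsPrefixClosed L) : prCl L = L :=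
  Subset.antisymm (fun _ ⟨_, ht, hst⟩ => hL hst ht) fun s hs => ⟨s, hs, List.prefix_refl s⟩

theorem IsPrefixClosed.truncL_postL {L : Set (List α)} (hL : IsPrefixClosed L) (s : List α)
    (m : ℕ) : IsPrefixClosed (truncL (postL L s) m) := by
  rintro p t ⟨c, rfl⟩ ⟨hpc, hlen⟩
  exact ⟨hL ⟨c, List.append_assoc s p c⟩ hpc, (List.prefix_append p c).length_le.trans hlen⟩

theorem forall_prefix_concat_iff {P : List α → Prop} {s : List α} {σ : α} :
    (∀ p, p <+: s ++ [σ] → P p) ↔ (∀ p, p <+: s → P p) ∧ P (s ++ [σ]) := by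
  simp only [List.prefix_concat_iff, or_imp, forall_and, forall_eq]
  exact and_comm

theorem forall_prefix_singleton_iff {P : List α → Prop} {σ : α} :
    (∀ p, p <+: [σ] → P p) ↔ P [] ∧ P [σ] := by
  simpa using forall_prefix_concat_iff (P := P) (s := []) (σ := σ)

theorem UcSafe.concat {K L : Set (List α)} {Suc : Set α} {u : List α} {σ : α}
    (hu : UcSafe K L Suc u) (hσ : σ ∈ Suc) : UcSafe K L Suc (u ++ [σ]) := by
  intro w hw huw
  simpa using hu (σ :: w) (by simpa [hσ] using hw) (by simpa using huw)

theorem UcSafe.concat_mem {K L : Set (List α)} {Suc : Set α} {u : List α} {σ : α}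
    (hu : UcSafe K L Suc u) (hσ : σ ∈ Suc) (huσ : u ++ [σ] ∈ L) : u ++ [σ] ∈ K :=
  hu [σ] (by simpa using hσ) huσ

theorem ctrb.append_mem_prCl {M L : Set (List α)} {Suc : Set α} (hL : IsPrefixClosed L)
    (hM : ctrb M L Suc) {w : List α} (hw : ∀ σ ∈ w, σ ∈ Suc) :
    ∀ {p : List α}, p ∈ prCl M → p ++ w ∈ L → p ++ w ∈ prCl M := by
  induction w with
  | nil => intro p hp _; simpa using hp
  | cons σ w ih =>
    intro p hp hpw
    have hpσ : p ++ [σ] ∈ prCl M :=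
      hM p hp σ (hw σ (by simp)) (hL ⟨w, by simp⟩ hpw)
    simpa using ih (fun τ hτ => hw τ (by simp [hτ])) hpσ (by simpa using hpw)

section SupremalControllable

variable {K L : Set (List α)} {Suc : Set α}

def ucSafeStrings (K L : Set (List α)) (Suc : Set α) : Set (List α) :=
  {t | t ∈ K ∧ ∀ p, p <+: t → UcSafe K L Suc p}

theorem mem_ucSafeStrings {t : List α} :
    t ∈ ucSafeStrings K L Suc ↔ t ∈ K ∧ ∀ p, p <+: t → UcSafe K L Suc p :=
  Iff.rfl

theorem isPrefixClosed_ucSafeStrings (hK : IsPrefixClosed K) :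
    IsPrefixClosed (ucSafeStrings K L Suc) := fun _ _ hst ⟨htK, hsafe⟩ =>
  ⟨hK hst htK, fun p hp => hsafe p (hp.trans hst)⟩

theorem concat_mem_ucSafeStrings {s : List α} {σ : α} (hs : s ∈ ucSafeStrings K L Suc)
    (hσ : σ ∈ Suc) (hsσ : s ++ [σ] ∈ L) : s ++ [σ] ∈ ucSafeStrings K L Suc := by
  have hs_safe := hs.2 s (List.prefix_refl s)
  exact ⟨hs_safe.concat_mem hσ hsσ, forall_prefix_concat_iff.2 ⟨hs.2, hs_safe.concat hσ⟩⟩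

theorem ctrb_ucSafeStrings (hK : IsPrefixClosed K) : ctrb (ucSafeStrings K L Suc) L Suc := by
  intro s hs σ hσ hsσ
  rw [(isPrefixClosed_ucSafeStrings hK).prCl_eq] at hs ⊢
  exact concat_mem_ucSafeStrings hs hσ hsσ

theorem supC_eq_ucSafeStrings (hK : IsPrefixClosed K) (hL : IsPrefixClosed L) :
    supC K L Suc = ucSafeStrings K L Suc := by
  refine Subset.antisymm ?_ fun t ht => ⟨_, ⟨fun _ h => h.1, ctrb_ucSafeStrings hK⟩, ht⟩
  rintro t ⟨M, ⟨hMK, hM⟩, htM⟩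
  refine ⟨hMK htM, fun p hp w hw hpw => ?_⟩
  obtain ⟨u, huM, hpwu⟩ := hM.append_mem_prCl hL hw ⟨t, htM, hp⟩ hpw
  exact hK hpwu (hMK huM)

end SupremalControllable

theorem length_le_of_mem_upperBounds_uncLens {Suc : Set α} {L : Set (List α)} {n : ℕ}
    (hn : n ∈ upperBounds (uncLens Suc L)) {u w : List α} (hw : ∀ σ ∈ w, σ ∈ Suc)
    (huw : u ++ w ∈ L) : w.length ≤ n :=
  hn ⟨w, rfl, hw, u, [], by simpa using huw⟩

section Lookahead

variable {K L : Set (List α)} {Suc : Set α} {N n : ℕ}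

theorem ucSafe_truncL_postL_iff {s q : List α}
    (hlen : ∀ w, (∀ σ ∈ w, σ ∈ Suc) → s ++ q ++ w ∈ L → q.length + w.length < N) :
    UcSafe (truncL (postL K s) (N - 1)) (truncL (postL L s) N) Suc q ↔
      UcSafe K L Suc (s ++ q) := by
  refine forall_congr' fun w => imp_congr_right fun hw => ?_
  simp only [truncL, postL, mem_ofPred_eq, List.length_append, ← List.append_assoc]
  constructor
  · intro h hL
    have := hlen w hw hL
    exact (h ⟨hL, by omega⟩).1
  · intro h ⟨hL, _⟩
    have := hlen w hw hL
    exact ⟨h hL, by omega⟩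

theorem mem_fCons_iff (hK : IsPrefixClosed K) (hL : IsPrefixClosed L)
    (hn : n ∈ upperBounds (uncLens Suc L)) {s q : List α} (hqN : q.length + n < N) :
    q ∈ fCons K L Suc N s ↔ s ++ q ∈ K ∧ ∀ p, p <+: q → UcSafe K L Suc (s ++ p) := by
  rw [fCons, supC_eq_ucSafeStrings (hK.truncL_postL s _) (hL.truncL_postL s _), mem_ucSafeStrings]
  refine and_congr ⟨And.left, fun h => ⟨h, by omega⟩⟩ (forall₂_congr fun p hp => ?_)
  refine ucSafe_truncL_postL_iff fun w hw hpw => ?_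
  have := hp.length_le
  have := length_le_of_mem_upperBounds_uncLens hn hw hpw
  omega

theorem isPrefixClosed_fCons (hK : IsPrefixClosed K) (hL : IsPrefixClosed L) (s : List α) :
    IsPrefixClosed (fCons K L Suc N s) := by
  rw [fCons, supC_eq_ucSafeStrings (hK.truncL_postL s _) (hL.truncL_postL s _)]
  exact isPrefixClosed_ucSafeStrings (hK.truncL_postL s _)

theorem nil_mem_ucSafeStrings_of_fCons_nonempty (hK : IsPrefixClosed K) (hL : IsPrefixClosed L)
    (hn : n ∈ upperBounds (uncLens Suc L)) (hnN : n < N)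
    (hstart : (fCons K L Suc N []).Nonempty) : [] ∈ ucSafeStrings K L Suc := by
  obtain ⟨t, ht⟩ := hstart
  have hnil := isPrefixClosed_fCons hK hL [] List.nil_prefix ht
  rw [mem_fCons_iff hK hL hn (by simpa using hnN)] at hnil
  simpa [mem_ucSafeStrings] using hnil

theorem concat_mem_ucSafeStrings_iff (hK : IsPrefixClosed K) (hL : IsPrefixClosed L)
    (hn : n ∈ upperBounds (uncLens Suc L)) (hnN : n + 2 ≤ N) {s : List α} {σ : α}
    (hs : s ∈ ucSafeStrings K L Suc) :
    s ++ [σ] ∈ ucSafeStrings K L Suc ↔ [σ] ∈ fCons K L Suc N s := by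
  rw [mem_fCons_iff hK hL hn (by rw [List.length_singleton]; omega), mem_ucSafeStrings,
    forall_prefix_concat_iff, forall_prefix_singleton_iff, List.append_nil]
  exact ⟨fun ⟨hsσ, _, h⟩ => ⟨hsσ, hs.2 s (List.prefix_refl s), h⟩,
    fun ⟨hsσ, _, h⟩ => ⟨hsσ, hs.2, h⟩⟩

theorem loopLang_γCons_eq_ucSafeStrings (hK : IsPrefixClosed K) (hL : IsPrefixClosed L)
    (hKL : K ⊆ L) (hn : n ∈ upperBounds (uncLens Suc L)) (hnN : n + 2 ≤ N)
    (hstart : (fCons K L Suc N []).Nonempty) :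
    loopLang L (γCons K L Suc N) = ucSafeStrings K L Suc := by
  refine Subset.antisymm (fun s hs => ?_) fun s hs => ?_
  · induction hs with
    | nil => exact nil_mem_ucSafeStrings_of_fCons_nonempty hK hL hn (by omega) hstart
    | snoc _ hsσ hσ ih =>
      rcases hσ with hσ | ⟨hσ, -⟩
      · rw [(isPrefixClosed_fCons hK hL _).prCl_eq] at hσ
        exact (concat_mem_ucSafeStrings_iff hK hL hn hnN ih).2 hσ
      · exact concat_mem_ucSafeStrings ih hσ hsσ
  · induction s using List.reverseRecOn with
    | nil => exact InLoop.nil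
    | append_singleton s σ ih =>
      have hs' := isPrefixClosed_ucSafeStrings hK (List.prefix_append s [σ]) hs
      have hσ := (concat_mem_ucSafeStrings_iff hK hL hn hnN hs').1 hs
      exact InLoop.snoc (ih hs') (hKL hs.1) (Or.inl ⟨[σ], hσ, List.prefix_refl _⟩)

end Lookahead

end

theorem cons_valid_caseI_plant_general {α : Type*}
    (Suc : Set α)
    (LG Lm K : Set (List α)) (hLG : LG = prCl Lm)
    (hKm : K ⊆ Lm)
    (hKpr : K = prCl K)
    (N : ℕ)
    (hstart : fCons K LG Suc N ([] : List α) ≠ ∅)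
    (h : ∃ n, IsGreatest (uncLens Suc LG) n ∧ n + 2 ≤ N) :
    loopLang LG (γCons K LG Suc N) = prCl (supC K LG Suc) := by
  obtain ⟨n, hn, hnN⟩ := h
  have hK : IsPrefixClosed K := hKpr ▸ isPrefixClosed_prCl K
  have hL : IsPrefixClosed LG := hLG ▸ isPrefixClosed_prCl Lm
  have hKL : K ⊆ LG := fun s hs => hLG ▸ ⟨s, hKm hs, List.prefix_refl s⟩
  rw [supC_eq_ucSafeStrings hK hL, (isPrefixClosed_ucSafeStrings hK).prCl_eq]
  exact loopLang_γCons_eq_ucSafeStrings hK hL hKL hn.2 hnN (nonempty_iff_ne_empty.2 hstart)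

/-- Case I (`K = pr(K)`), conservative attitude, approximating
`N_u(K)` by `N_u(L(G))`. If there is no starting error and
`N ≥ N_u(L(G)) + 2`, then `L(G, γ^N_cons) = pr(K↑)`. -/
theorem cons_valid_caseI_plant {α : Type*} [Fintype α]
    (Sc Suc : Set α) (hpart : Sc ∪ Suc = Set.univ) (hdisj : Disjoint Sc Suc)
    (LG Lm K : Set (List α)) (hLG : LG = prCl Lm)
    (hKm : K ⊆ Lm) (hKcl : K = prCl K ∩ Lm)
    (hKpr : K = prCl K)
    (N : ℕ)
    (hstart : fCons K LG Suc N ([] : List α) ≠ ∅)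
    (h : ∃ n, IsGreatest (uncLens Suc LG) n ∧ n + 2 ≤ N) :
    loopLang LG (γCons K LG Suc N) = prCl (supC K LG Suc) :=
  cons_valid_caseI_plant_general Suc LG Lm K hLG hKm hKpr N hstart h
end

section
/- Suppose the legal language is prefix-closed, K = pr(K), there is no starting error in L(G, γ^N_cons) (i.e. f^N_cons(ε) ≠ ∅), and K contains no string consisting of N−1 uncontrollable events (K ∩ Σ_uc^{N−1} = ∅). Then L(G, γ^N_cons) = (K^N_pruned)↑, where K^N_pruned = K \ ((K/Σ_uc^{N−1})·Σ*) with K/Σ_uc^{N−1} = {s ∈ Σ* : ∃ t ∈ Σ_uc* with |t| = N−1 and st ∈ K}, and (·)↑ denotes the supremal controllable sublanguage w.r.t. L(G). -/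
open Set

/-- `K/Σ_uc^{N-1}`: traces extendable to a member of `K` by `N-1` uncontrollable events. -/
def extByUnc {α : Type*} (K : Set (List α)) (Suc : Set α) (n : ℕ) : Set (List α) :=
  {s | ∃ t : List α, (∀ σ ∈ t, σ ∈ Suc) ∧ t.length = n ∧ s ++ t ∈ K}

/-- `K^N_pruned = K \ (K/Σ_uc^{N-1})·Σ*`. -/
def Kpruned {α : Type*} (K : Set (List α)) (Suc : Set α) (N : ℕ) : Set (List α) :=
  K \ {w | ∃ s ∈ extByUnc K Suc (N - 1), s <+: w}

namespace LLPAux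

variable {α : Type*}

/-- Prefix-closedness predicate. -/
def PC (L : Set (List α)) : Prop := ∀ ⦃s t : List α⦄, s <+: t → t ∈ L → s ∈ L

lemma pc_prCl (L : Set (List α)) : PC (prCl L) :=
  fun _ _ hst ⟨w, hw, htw⟩ => ⟨w, hw, hst.trans htw⟩

lemma mem_trunc {L : Set (List α)} {s t : List α} {m : ℕ} :
    t ∈ truncL (postL L s) m ↔ s ++ t ∈ L ∧ t.length ≤ m := Iff.rfl

lemma pc_truncPost {L : Set (List α)} (h : PC L) (s : List α) (m : ℕ) :
    PC (truncL (postL L s) m) := by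
  rintro u v huv ⟨hv, hlen⟩
  exact ⟨h ((List.prefix_append_right_inj s).2 huv) hv, le_trans huv.length_le hlen⟩

lemma supC_subset {KK LL : Set (List α)} {Suc : Set α} : supC KK LL Suc ⊆ KK := by
  rintro t ht
  obtain ⟨M, ⟨hMK, -⟩, htM⟩ := Set.mem_sUnion.1 ht
  exact hMK htM

lemma mem_supC_iff {KK LL : Set (List α)} {Suc : Set α}
    (hK : PC KK) (hL : PC LL) {t : List α} :
    t ∈ supC KK LL Suc ↔
      t ∈ KK ∧ ∀ v, v <+: t → ∀ u, (∀ σ ∈ u, σ ∈ Suc) → v ++ u ∈ LL → v ++ u ∈ KK := by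
  constructor
  · intro ht
    obtain ⟨M, ⟨hMK, hc⟩, htM⟩ := Set.mem_sUnion.1 ht
    have hpr : ∀ u : List α, ∀ v, v ∈ prCl M → (∀ σ ∈ u, σ ∈ Suc) → v ++ u ∈ LL →
        v ++ u ∈ prCl M := by
      intro u
      induction u with
      | nil => intro v hv _ _; simpa using hv
      | cons τ u ih =>
        intro v hv hu hvL
        have h1 : v ++ [τ] ∈ prCl M := by
          refine hc v hv τ (hu τ (by simp)) (hL ?_ hvL)
          exact (List.prefix_append_right_inj v).2 ⟨u, by simp⟩
        have h2 := ih (v ++ [τ]) h1 (fun σ hσ => hu σ (by simp [hσ]))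
          (by simpa [List.append_assoc] using hvL)
        simpa [List.append_assoc] using h2
    refine ⟨hMK htM, fun v hv u hu hvL => ?_⟩
    obtain ⟨w, hwM, hvw⟩ := hpr u v ⟨t, htM, hv⟩ hu hvL
    exact hK hvw (hMK hwM)
  · intro ht
    refine Set.mem_sUnion.2 ⟨{s | s ∈ KK ∧ ∀ v, v <+: s → ∀ u, (∀ σ ∈ u, σ ∈ Suc) →
      v ++ u ∈ LL → v ++ u ∈ KK}, ⟨fun s hs => hs.1, ?_⟩, ht⟩
    intro s hs σ hσ hsL
    have hsG : s ∈ KK ∧ ∀ v, v <+: s → ∀ u, (∀ σ ∈ u, σ ∈ Suc) →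
        v ++ u ∈ LL → v ++ u ∈ KK := by
      obtain ⟨b, hb, hab⟩ := hs
      exact ⟨hK hab hb.1, fun v hv u hu hvL => hb.2 v (hv.trans hab) u hu hvL⟩
    have h1 : s ++ [σ] ∈ KK := hsG.2 s List.prefix_rfl [σ] (by simpa using hσ) hsL
    refine ⟨s ++ [σ], ⟨h1, fun v hv u hu hvL => ?_⟩, List.prefix_rfl⟩
    rcases List.prefix_concat_iff.1 hv with rfl | hv'
    · have h3 := hsG.2 s List.prefix_rfl (σ :: u)
        (by intro τ hτ; rcases List.mem_cons.1 hτ with rfl | h; exacts [hσ, hu τ h])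
        (by simpa [List.append_assoc] using hvL)
      simpa [List.append_assoc] using h3
    · exact hsG.2 v hv' u hu hvL

end LLPAux

/-- if `K = pr(K)`, there is no starting error, and
`K ∩ Σ_uc^{N-1} = ∅`, then `L(G, γ^N_cons) = (K^N_pruned)↑`. -/
theorem cons_language_eq_pruned {α : Type*} [Fintype α]
    (Sc Suc : Set α) (hpart : Sc ∪ Suc = Set.univ) (hdisj : Disjoint Sc Suc)
    (LG Lm K : Set (List α)) (hLG : LG = prCl Lm)
    (hKm : K ⊆ Lm) (hKcl : K = prCl K ∩ Lm)
    (hKpr : K = prCl K)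
    (N : ℕ)
    (hstart : fCons K LG Suc N ([] : List α) ≠ ∅)
    (hKunc : ¬ ∃ t ∈ K, (∀ σ ∈ t, σ ∈ Suc) ∧ t.length = N - 1) :
    loopLang LG (γCons K LG Suc N) = supC (Kpruned K Suc N) LG Suc := by
  classical
  have hKpc : LLPAux.PC K := by
    intro s t hst htK
    rw [hKpr]; exact ⟨t, htK, hst⟩
  have hLGpc : LLPAux.PC LG := by
    rw [hLG]; exact LLPAux.pc_prCl Lm
  have hKLG : K ⊆ LG := by
    intro s hs; rw [hLG]; exact ⟨s, hKm hs, List.prefix_rfl⟩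
  have hApc : ∀ s : List α, LLPAux.PC (truncL (postL K s) (N - 1)) :=
    fun s => LLPAux.pc_truncPost hKpc s _
  have hBpc : ∀ s : List α, LLPAux.PC (truncL (postL LG s) N) :=
    fun s => LLPAux.pc_truncPost hLGpc s _
  -- basic facts from the no-starting-error hypothesis
  obtain ⟨t0, ht0⟩ := Set.nonempty_iff_ne_empty.2 hstart
  have ht0K : t0 ∈ K ∧ t0.length ≤ N - 1 := by
    have h := LLPAux.supC_subset ht0
    rw [LLPAux.mem_trunc] at h
    simpa using h
  have hnilK : ([] : List α) ∈ K := hKpc (List.nil_prefix) ht0K.1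
  have hn1 : 1 ≤ N - 1 := by
    rcases Nat.eq_zero_or_pos (N - 1) with h0 | h
    · exact absurd ⟨[], hnilK, by simp, by simp [h0]⟩ hKunc
    · exact h
  -- prefix-closedness of fCons
  have hfpc : ∀ s : List α, LLPAux.PC (fCons K LG Suc N s) := by
    intro s a b hab hb
    unfold fCons at hb ⊢
    rw [LLPAux.mem_supC_iff (hApc s) (hBpc s)] at hb ⊢
    exact ⟨hApc s hab hb.1, fun v hv u hu h => hb.2 v (hv.trans hab) u hu h⟩
  -- characterization of `[] ∈ fCons s`
  have hf_nil : ∀ s : List α, [] ∈ fCons K LG Suc N s ↔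
      (s ∈ K ∧ ∀ u, (∀ σ ∈ u, σ ∈ Suc) → s ++ u ∈ LG →
        s ++ u ∈ K ∧ u.length ≤ N - 1) := by
    intro s
    unfold fCons
    rw [LLPAux.mem_supC_iff (hApc s) (hBpc s)]
    constructor
    · rintro ⟨hA, hcond⟩
      rw [LLPAux.mem_trunc] at hA
      refine ⟨by simpa using hA.1, ?_⟩
      intro u hu hsuLG
      by_cases hlen : u.length ≤ N
      · have h := hcond [] (List.nil_prefix) u hu
          (by rw [LLPAux.mem_trunc]; simpa using ⟨hsuLG, hlen⟩)
        rw [LLPAux.mem_trunc] at h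
        simpa using h
      · exfalso
        have h1 : (u.take N).length = N := by rw [List.length_take]; omega
        have h2 : s ++ u.take N ∈ LG :=
          hLGpc ((List.prefix_append_right_inj s).2 (List.take_prefix N u)) hsuLG
        have h := hcond [] (List.nil_prefix) (u.take N)
          (fun σ hσ => hu σ (List.take_subset N u hσ))
          (by rw [LLPAux.mem_trunc]; exact ⟨by simpa using h2, by simpa using le_of_eq h1⟩)
        rw [LLPAux.mem_trunc] at h
        have := h.2
        simp only [List.nil_append] at this
        omega
    · rintro ⟨hsK, hQ⟩
      refine ⟨by rw [LLPAux.mem_trunc]; simpa using hsK, ?_⟩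
      intro v hv u hu hB
      rw [List.prefix_nil.1 hv] at hB ⊢
      rw [LLPAux.mem_trunc] at hB ⊢
      simp only [List.nil_append] at hB ⊢
      exact hQ u hu hB.1
  -- characterization of `[σ] ∈ fCons s`
  have hf_single : ∀ (s : List α) (σ : α), [σ] ∈ fCons K LG Suc N s ↔
      ([] ∈ fCons K LG Suc N s ∧ s ++ [σ] ∈ K ∧
        ∀ u, (∀ τ ∈ u, τ ∈ Suc) → (s ++ [σ]) ++ u ∈ LG →
          (s ++ [σ]) ++ u ∈ K ∧ u.length + 1 ≤ N - 1) := by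
    intro s σ
    constructor
    · intro h
      have hnil : [] ∈ fCons K LG Suc N s := hfpc s (List.nil_prefix) h
      unfold fCons at h
      rw [LLPAux.mem_supC_iff (hApc s) (hBpc s)] at h
      obtain ⟨hA, hcond⟩ := h
      rw [LLPAux.mem_trunc] at hA
      refine ⟨hnil, by simpa [List.append_assoc] using hA.1, ?_⟩
      intro u hu huLG
      by_cases hlen : u.length ≤ N - 1
      · have h := hcond [σ] List.prefix_rfl u hu
          (by rw [LLPAux.mem_trunc]
              constructor
              · simpa [List.append_assoc] using huLG
              · simp; omega)
        rw [LLPAux.mem_trunc] at h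
        simp only [List.cons_append, List.nil_append, List.length_cons] at h
        exact ⟨by simpa [List.append_assoc] using h.1, by
          have := h.2; simp at this; omega⟩
      · exfalso
        have h1 : (u.take (N-1)).length = N - 1 := by rw [List.length_take]; omega
        have h2 : (s ++ [σ]) ++ u.take (N-1) ∈ LG :=
          hLGpc ((List.prefix_append_right_inj _).2 (List.take_prefix _ u)) huLG
        have h := hcond [σ] List.prefix_rfl (u.take (N-1))
          (fun τ hτ => hu τ (List.take_subset _ u hτ))
          (by rw [LLPAux.mem_trunc]
              constructor
              · simpa [List.append_assoc] using h2
              · simp [h1]; omega)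
        rw [LLPAux.mem_trunc] at h
        have := h.2
        simp only [List.cons_append, List.nil_append, List.length_cons] at this
        omega
    · rintro ⟨hnil, hσK, hstrong⟩
      rw [hf_nil s] at hnil
      unfold fCons
      rw [LLPAux.mem_supC_iff (hApc s) (hBpc s)]
      constructor
      · rw [LLPAux.mem_trunc]
        exact ⟨hσK, by simpa using hn1⟩
      · intro v hv u hu hB
        rw [LLPAux.mem_trunc] at hB ⊢
        have hv' : v = [σ] ∨ v <+: ([] : List α) := by
          have := List.prefix_concat_iff.1 (by simpa using hv : v <+: [] ++ [σ])
          simpa using this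
        rcases hv' with rfl | hv0
        · have h := hstrong u hu (by
            have := hB.1
            simpa [List.append_assoc] using this)
          constructor
          · simpa [List.append_assoc] using h.1
          · simp only [List.cons_append, List.nil_append, List.length_cons]
            omega
        · have hveq : v = [] := List.prefix_nil.1 hv0
          subst hveq
          simp only [List.nil_append] at hB ⊢
          exact hnil.2 u hu hB.1
  -- prefix-closedness of Kpruned
  have hKPpc : LLPAux.PC (Kpruned K Suc N) := by
    rintro a b hab ⟨hbK, hbn⟩
    refine ⟨hKpc hab hbK, fun h => hbn ?_⟩
    obtain ⟨v, hvE, hva⟩ := h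
    exact ⟨v, hvE, hva.trans hab⟩
  -- the loop language is prefix-closed
  have hlooppc : ∀ s, InLoop LG (γCons K LG Suc N) s →
      ∀ v, v <+: s → InLoop LG (γCons K LG Suc N) v := by
    intro s hs
    induction hs with
    | nil =>
      intro v hv
      rw [List.prefix_nil.1 hv]; exact InLoop.nil
    | snoc h1 h2 h3 ih =>
      intro v hv
      rcases List.prefix_concat_iff.1 hv with rfl | hv'
      · exact InLoop.snoc ‹_› h2 h3
      · exact ih v hv'
  -- the loop invariant
  have hinv : ∀ s, InLoop LG (γCons K LG Suc N) s →
      ([] ∈ fCons K LG Suc N s ∧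
       ∀ v, v <+: s → ∀ t, (∀ τ ∈ t, τ ∈ Suc) → t.length = N - 1 → v ++ t ∉ K) := by
    intro s hs
    induction hs with
    | nil =>
      constructor
      · exact hfpc [] (List.nil_prefix) ht0
      · intro v hv t ht hlen htK
        rw [List.prefix_nil.1 hv] at htK
        exact hKunc ⟨t, by simpa using htK, ht, hlen⟩
    | @snoc s σ h1 h2 h3 ih =>
      have h3' : [σ] ∈ prCl (fCons K LG Suc N s) ∨ (σ ∈ Suc ∧ s ++ [σ] ∈ LG) := by
        simpa [γCons, policy, activeSet] using h3
      rcases h3' with hσ | ⟨hσSuc, -⟩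
      · -- controllable-style step: the decision explicitly allowed σ
        have hσf : [σ] ∈ fCons K LG Suc N s := by
          obtain ⟨w, hw, hpw⟩ := hσ
          exact hfpc s hpw hw
        rw [hf_single] at hσf
        obtain ⟨-, hσK, hstrong⟩ := hσf
        constructor
        · rw [hf_nil]
          refine ⟨hσK, fun u hu huLG => ?_⟩
          have h := hstrong u hu huLG
          exact ⟨h.1, by omega⟩
        · intro v hv t ht hlen htK
          rcases List.prefix_concat_iff.1 hv with rfl | hv'
          · have h := hstrong t ht (hKLG htK)
            omega
          · exact ih.2 v hv' t ht hlen htK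
      · -- uncontrollable step
        have hQ := (hf_nil s).1 ih.1
        constructor
        · rw [hf_nil]
          have hσK : s ++ [σ] ∈ K :=
            (hQ.2 [σ] (by simpa using hσSuc) h2).1
          refine ⟨hσK, fun u hu huLG => ?_⟩
          have h := hQ.2 (σ :: u)
            (by intro τ hτ; rcases List.mem_cons.1 hτ with rfl | hm; exacts [hσSuc, hu τ hm])
            (by simpa [List.append_assoc] using huLG)
          refine ⟨by simpa [List.append_assoc] using h.1, ?_⟩
          have := h.2; simp at this; omega
        · intro v hv t ht hlen htK
          rcases List.prefix_concat_iff.1 hv with rfl | hv'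
          · have h := hQ.2 (σ :: t)
              (by intro τ hτ; rcases List.mem_cons.1 hτ with rfl | hm; exacts [hσSuc, ht τ hm])
              (by simpa [List.append_assoc] using hKLG htK)
            have := h.2; simp at this; omega
          · exact ih.2 v hv' t ht hlen htK
  -- forward inclusion
  have hsub1 : loopLang LG (γCons K LG Suc N) ⊆ supC (Kpruned K Suc N) LG Suc := by
    intro s hs
    have hs' : InLoop LG (γCons K LG Suc N) s := hs
    rw [LLPAux.mem_supC_iff hKPpc hLGpc]
    have hKP : ∀ w, w <+: s → ∀ u, (∀ τ ∈ u, τ ∈ Suc) → w ++ u ∈ LG →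
        w ++ u ∈ Kpruned K Suc N := by
      intro w hw u hu hwuLG
      have hwloop := hlooppc s hs' w hw
      have hinvw := hinv w hwloop
      have hQw := (hf_nil w).1 hinvw.1
      have hwuK : w ++ u ∈ K := (hQw.2 u hu hwuLG).1
      refine ⟨hwuK, ?_⟩
      rintro ⟨x, ⟨t, htu, htlen, hxtK⟩, hxpre⟩
      by_cases hlx : x.length ≤ w.length
      · have hxw : x <+: w := List.prefix_of_prefix_length_le hxpre ⟨u, rfl⟩ hlx
        exact hinv s hs' |>.2 x (hxw.trans hw) t htu htlen hxtK
      · have hwx : w <+: x :=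
          List.prefix_of_prefix_length_le ⟨u, rfl⟩ hxpre (by omega)
        obtain ⟨u', rfl⟩ := hwx
        have hu'u : u' <+: u := (List.prefix_append_right_inj w).1 hxpre
        have h := hQw.2 (u' ++ t)
          (by intro τ hτ
              rcases List.mem_append.1 hτ with hm | hm
              exacts [hu τ (hu'u.subset hm), htu τ hm])
          (by rw [← List.append_assoc]; exact hKLG hxtK)
        have hlen2 := h.2
        rw [List.length_append] at hlen2
        have hu0 : u' = [] := by
          rw [← List.length_eq_zero_iff]; omega
        subst hu0
        exact hinv s hs' |>.2 w hw t htu htlen (by simpa using hxtK)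
    refine ⟨?_, fun v hv u hu hvuLG => hKP v hv u hu hvuLG⟩
    have := hKP s List.prefix_rfl [] (by simp) (by simpa using hKLG ((hf_nil s).1 (hinv s hs').1).1)
    simpa using this
  -- reverse inclusion
  have hsub2 : ∀ s, s ∈ supC (Kpruned K Suc N) LG Suc → InLoop LG (γCons K LG Suc N) s := by
    intro s
    induction s using List.reverseRecOn with
    | nil => intro _; exact InLoop.nil
    | append_singleton v σ ih =>
      intro hs
      rw [LLPAux.mem_supC_iff hKPpc hLGpc] at hs
      obtain ⟨hsKP, hcond⟩ := hs
      have key : ∀ w, w <+: v ++ [σ] → ∀ u, (∀ τ ∈ u, τ ∈ Suc) → w ++ u ∈ LG →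
          w ++ u ∈ K ∧ u.length + 1 ≤ N - 1 := by
        intro w hw u hu hwu
        have hKP : w ++ u ∈ Kpruned K Suc N := hcond w hw u hu hwu
        refine ⟨hKP.1, ?_⟩
        by_contra hlen
        apply hKP.2
        refine ⟨w ++ u.take (u.length - (N - 1)),
          ⟨u.drop (u.length - (N - 1)), ?_, ?_, ?_⟩, ?_⟩
        · exact fun τ hτ => hu τ (List.drop_subset _ u hτ)
        · rw [List.length_drop]; omega
        · rw [List.append_assoc, List.take_append_drop]; exact hKP.1
        · exact (List.prefix_append_right_inj w).2 (List.take_prefix _ u)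
      have hvKP : v ∈ Kpruned K Suc N := hKPpc ⟨[σ], rfl⟩ hsKP
      have hvloop : InLoop LG (γCons K LG Suc N) v := by
        apply ih
        rw [LLPAux.mem_supC_iff hKPpc hLGpc]
        exact ⟨hvKP, fun w hw u hu h => hcond w (hw.trans ⟨[σ], rfl⟩) u hu h⟩
      have hvσLG : v ++ [σ] ∈ LG := hKLG hsKP.1
      refine InLoop.snoc hvloop hvσLG ?_
      -- σ is enabled because [σ] ∈ fCons v
      have hσf : [σ] ∈ fCons K LG Suc N v := by
        rw [hf_single]
        refine ⟨?_, hsKP.1, fun u hu huLG => key (v ++ [σ]) List.prefix_rfl u hu huLG⟩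
        rw [hf_nil]
        refine ⟨hvKP.1, fun u hu huLG => ?_⟩
        have h := key v ⟨[σ], rfl⟩ u hu huLG
        exact ⟨h.1, by omega⟩
      exact Or.inl ⟨[σ], hσf, List.prefix_rfl⟩
  ext s
  exact ⟨fun hs => hsub1 hs, fun hs => hsub2 s hs⟩
end

section
/- Suppose K↑ ≠ ∅ and the measure N_mcfc̄ exists. If N ≥ N_mcfc̄ + 1, then the optimistic LLP supervisor is valid: L(G, γ^N_optm) = pr(K↑). -/
open Set

/-- `L_c(G)`: traces of the plant after which only controllable events are possible. -/
def LcG {α : Type*} (L : Set (List α)) (Suc : Set α) : Set (List α) :=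
  {s ∈ L | ∀ σ ∈ Suc, s ++ [σ] ∉ L}

/-- `K_mc`: legal, marked, controllable traces. -/
def Kmc {α : Type*} (K L : Set (List α)) (Suc : Set α) : Set (List α) :=
  K ∩ LcG L Suc

/-- `K_fc̄`: uncontrollably crossing traces. -/
def Kfc {α : Type*} (K L : Set (List α)) (Suc : Set α) : Set (List α) :=
  {s ∈ prCl K | ∃ σ ∈ Suc, s ++ [σ] ∈ L ∧ s ++ [σ] ∉ prCl K}

/-- The set of lengths whose greatest element (when it exists) is `N_mcfc̄`. -/
def NmcfcSet {α : Type*} (K L : Set (List α)) (Suc : Set α) : Set ℕ :=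
  {n | ∃ t : List α, t.length = n ∧ ∃ s ∈ Kmc K L Suc ∪ {([] : List α)},
      s ++ t ∈ Kfc K L Suc ∧
      ∀ v : List α, v <+: t → v ≠ [] → v ≠ t → s ++ v ∉ Kfc K L Suc ∪ Kmc K L Suc}


/-!
Every string `sσ ∈ pr(K↑)` is let through: the continuations of `s` inside `pr(K↑)`, cut at
length `N`, form a controllable sublanguage of the look-ahead target, so `σ` is enabled.
Conversely, an event `σ` enabled by `f^N_optm(s)` starts a run that follows `pr(f^N_optm(s))`
for `N` steps, then `pr(K)`, and stops in `K_mc`. The run never leaves `pr(K)` uncontrollably: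
inside the window because `f^N_optm(s)` is controllable, beyond it because a first crossing lies
at most `N_mcfc̄ < N` steps after the last string of `K_mc ∪ {ε}`, which then precedes `s`.
Together with `pr(K↑)` the run is prefix-closed, controllable and extends into `K`, hence lies
in `pr(K↑)`.
-/

open List

section Prefix

variable {α : Type*}

theorem List.prefix_append_or {q s w : List α} (h : q <+: s ++ w) :
    q <+: s ∨ ∃ v, v <+: w ∧ s ++ v = q := by
  rcases le_or_gt q.length s.length with hle | hlt
  · exact Or.inl (prefix_of_prefix_length_le h (prefix_append s w) hle)
  · obtain ⟨v, rfl⟩ := prefix_of_prefix_length_le (prefix_append s w) h hlt.le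
    exact Or.inr ⟨v, (prefix_append_right_inj s).1 h, rfl⟩

theorem List.exists_first_prefix {P : List α → Prop} {y z : List α} (hyz : y <+: z) (hz : P z) :
    ∃ q, y <+: q ∧ q <+: z ∧ P q ∧ ∀ q', y <+: q' → q' <+: q → q' ≠ q → ¬ P q' := by
  classical
  have hex : ∃ i, y.length ≤ i ∧ P (z.take i) := ⟨z.length, hyz.length_le, by simpa using hz⟩
  obtain ⟨hyi, hPi⟩ := Nat.find_spec hex
  refine ⟨z.take (Nat.find hex), prefix_take_iff.2 ⟨hyz, hyi⟩, take_prefix _ _, hPi,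
    fun q' hyq' hq'q hne hPq' => ?_⟩
  have hq'z : q' = z.take q'.length := prefix_iff_eq_take.1 (hq'q.trans (take_prefix _ _))
  have hlt : q'.length < Nat.find hex :=
    lt_of_le_of_ne (hq'q.length_le.trans (length_take_le _ _))
      fun h => hne (hq'q.eq_of_length (by simp [← h, (hq'q.trans (take_prefix _ _)).length_le]))
  exact Nat.find_min hex hlt ⟨hyq'.length_le, hq'z ▸ hPq'⟩

theorem List.exists_last_prefix {P : List α → Prop} (y : List α) (h0 : P []) :
    ∃ p, p <+: y ∧ P p ∧ ∀ q, p <+: q → q <+: y → q ≠ p → ¬ P q := by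
  classical
  set j := Nat.findGreatest (fun j => P (y.take j)) y.length
  have hjy : j ≤ y.length := Nat.findGreatest_le _
  have hj : P (y.take j) :=
    Nat.findGreatest_spec (P := fun j => P (y.take j)) (m := 0) (Nat.zero_le _) (by simpa using h0)
  refine ⟨y.take j, take_prefix _ _, hj, fun q hpq hqy hne hPq => ?_⟩
  have hlt : j < q.length := by
    have hle : j ≤ q.length := by simpa [hjy] using hpq.length_le
    exact lt_of_le_of_ne hle fun h => hne (hpq.eq_of_length (by simp [h, hqy.length_le])).symm
  exact Nat.findGreatest_is_greatest hlt hqy.length_le (prefix_iff_eq_take.1 hqy ▸ hPq)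

end Prefix

section Languages

variable {α : Type*} {K L : Set (List α)} {Suc : Set α}

theorem prCl_mono {A B : Set (List α)} (h : A ⊆ B) : prCl A ⊆ prCl B :=
  fun _ ⟨t, ht, hp⟩ => ⟨t, h ht, hp⟩

theorem subset_prCl (A : Set (List α)) : A ⊆ prCl A :=
  fun x hx => ⟨x, hx, prefix_rfl⟩

theorem mem_prCl_of_prefix {A : Set (List α)} {x q : List α} (hx : x ∈ prCl A) (hq : q <+: x) :
    q ∈ prCl A :=
  let ⟨t, ht, hp⟩ := hx; ⟨t, ht, hq.trans hp⟩

theorem supC_subset : supC K L Suc ⊆ K :=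
  fun _ ⟨_, ⟨hMK, _⟩, hx⟩ => hMK hx

theorem subset_supC {M : Set (List α)} (hMK : M ⊆ K) (hM : ctrb M L Suc) : M ⊆ supC K L Suc :=
  fun _ hx => ⟨M, ⟨hMK, hM⟩, hx⟩

theorem ctrb_supC : ctrb (supC K L Suc) L Suc := by
  rintro x ⟨m, ⟨M, hM, hmM⟩, hxm⟩ e he hL
  obtain ⟨m', hm', hp'⟩ := hM.2 x ⟨m, hmM, hxm⟩ e he hL
  exact ⟨m', ⟨M, hM, hm'⟩, hp'⟩

theorem subset_prCl_supC {T : Set (List α)} (hpre : ∀ x ∈ T, ∀ q, q <+: x → q ∈ T)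
    (hctrb : ∀ x ∈ T, ∀ e ∈ Suc, x ++ [e] ∈ L → x ++ [e] ∈ T)
    (hext : ∀ x ∈ T, ∃ m ∈ K ∩ T, x <+: m) : T ⊆ prCl (supC K L Suc) := by
  have hT : T ⊆ prCl (K ∩ T) := fun x hx => hext x hx
  have hM : ctrb (K ∩ T) L Suc := fun x ⟨m, hm, hxm⟩ e he hL =>
    hT (hctrb x (hpre m hm.2 x hxm) e he hL)
  exact hT.trans (prCl_mono (subset_supC inter_subset_left hM))

theorem notMem_Kfc_of_mem_Kmc {x : List α} (hx : x ∈ Kmc K L Suc) : x ∉ Kfc K L Suc :=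
  fun ⟨_, e, he, hL, _⟩ => hx.2.2 e he hL

theorem notMem_Kfc_of_mem_prCl_supC {x : List α} (hx : x ∈ prCl (supC K L Suc)) :
    x ∉ Kfc K L Suc :=
  fun ⟨_, e, he, hL, hout⟩ => hout (prCl_mono supC_subset (ctrb_supC x hx e he hL))

/-- `y'` is the shortest crossing prefix of `y`, and `p` the longest prefix of `y'` in
`K_mc ∪ {ε}`. -/
theorem exists_prefix_length_sub_mem_NmcfcSet {y : List α} (hy : y ∈ Kfc K L Suc) :
    ∃ y' p, y' <+: y ∧ y' ∈ Kfc K L Suc ∧ p <+: y' ∧ p ∈ Kmc K L Suc ∪ {[]} ∧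
      y'.length - p.length ∈ NmcfcSet K L Suc := by
  obtain ⟨y', -, hy'y, hy', hfirst⟩ := exists_first_prefix (P := (· ∈ Kfc K L Suc)) nil_prefix hy
  obtain ⟨p, ⟨t, rfl⟩, hp, hlast⟩ :=
    exists_last_prefix (P := (· ∈ Kmc K L Suc ∪ {[]})) y' (Or.inr rfl)
  refine ⟨p ++ t, p, hy'y, hy', prefix_append _ _, hp, t, by simp, p, hp, hy', ?_⟩
  intro v hvt hv hvt'
  have hpv : p ++ v <+: p ++ t := (prefix_append_right_inj p).2 hvt
  rintro (hKfc | hKmc)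
  · exact hfirst _ nil_prefix hpv (by simpa using hvt') hKfc
  · exact hlast _ (prefix_append _ _) hpv (by simpa using hv) (Or.inl hKmc)

end Languages

section Optimistic

variable {α : Type*} {K L : Set (List α)} {Suc : Set α} {N : ℕ} {s : List α}

theorem of_mem_fOptm {t : List α} (ht : t ∈ fOptm K L Suc N s) :
    t.length ≤ N ∧ (s ++ t ∈ K ∨ s ++ t ∈ prCl K ∧ t.length = N) := by
  rcases supC_subset ht with ⟨htK, hlen⟩ | ⟨⟨htK, hlen⟩, hnot⟩
  · exact ⟨hlen, Or.inl htK⟩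
  · exact ⟨hlen, Or.inr ⟨htK, by by_contra h; exact hnot ⟨htK, by omega⟩⟩⟩

theorem subset_fOptm (hN : 0 < N) {M : Set (List α)}
    (hM : ∀ t ∈ M, t.length ≤ N ∧ (s ++ t ∈ K ∨ s ++ t ∈ prCl K ∧ t.length = N))
    (hMc : ctrb M (truncL (postL L s) N) Suc) : M ⊆ fOptm K L Suc N s := by
  refine subset_supC (fun t ht => ?_) hMc
  rcases hM t ht with ⟨hlen, htK | ⟨htK, rfl⟩⟩
  · exact Or.inl ⟨htK, hlen⟩
  · exact Or.inr ⟨⟨htK, le_rfl⟩, fun h => by have := h.2; omega⟩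

theorem ctrb_fOptm : ctrb (fOptm K L Suc N s) (truncL (postL L s) N) Suc := ctrb_supC

theorem of_mem_prCl_fOptm {u : List α} (hu : u ∈ prCl (fOptm K L Suc N s)) :
    s ++ u ∈ prCl K ∧ u.length ≤ N := by
  obtain ⟨t, ht, hut⟩ := hu
  obtain ⟨hlen, htK | ⟨htK, -⟩⟩ := of_mem_fOptm ht
  · exact ⟨⟨s ++ t, htK, (prefix_append_right_inj s).2 hut⟩, hut.length_le.trans hlen⟩
  · exact ⟨mem_prCl_of_prefix htK ((prefix_append_right_inj s).2 hut), hut.length_le.trans hlen⟩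

theorem notMem_Kfc_of_mem_prCl_fOptm {u : List α} (hu : u ∈ prCl (fOptm K L Suc N s))
    (hlen : u.length < N) : s ++ u ∉ Kfc K L Suc := by
  rintro ⟨-, e, he, hL, hout⟩
  have hue := ctrb_fOptm u hu e he ⟨by simpa [postL] using hL, by simpa using hlen⟩
  exact hout (by simpa using (of_mem_prCl_fOptm hue).1)

theorem exists_truncated_extension {A : Set (List α)} {w : List α} (hw : s ++ w ∈ prCl A)
    (hlen : w.length ≤ N) :
    ∃ t, w <+: t ∧ s ++ t ∈ prCl A ∧ t.length ≤ N ∧ (s ++ t ∈ A ∨ t.length = N) := by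
  obtain ⟨_, ha, r, rfl⟩ := hw
  refine ⟨(w ++ r).take N, prefix_take_iff.2 ⟨prefix_append _ _, hlen⟩,
    ⟨_, ha, by simpa using (take_prefix N (w ++ r))⟩, length_take_le _ _, ?_⟩
  rcases le_or_gt (w ++ r).length N with hle | hlt
  · exact Or.inl (by simpa [take_of_length_le hle] using ha)
  · exact Or.inr (by simp only [length_take]; omega)

theorem singleton_mem_prCl_fOptm (hN : 0 < N) {σ : α} (h : s ++ [σ] ∈ prCl (supC K L Suc)) :
    [σ] ∈ prCl (fOptm K L Suc N s) := by
  set M := {t | s ++ t ∈ prCl (supC K L Suc) ∧ t.length ≤ N ∧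
    (s ++ t ∈ supC K L Suc ∨ t.length = N)}
  have hext : ∀ w, s ++ w ∈ prCl (supC K L Suc) → w.length ≤ N → w ∈ prCl M := fun w hw hlen =>
    let ⟨t, hwt, ht⟩ := exists_truncated_extension hw hlen; ⟨t, ht, hwt⟩
  have hMc : ctrb M (truncL (postL L s) N) Suc := by
    intro u hu e he ⟨hL, hlen⟩
    obtain ⟨t, ht, hut⟩ := hu
    have hsu := mem_prCl_of_prefix ht.1 ((prefix_append_right_inj s).2 hut)
    exact hext _ (by simpa using ctrb_supC _ hsu e he (by simpa [postL] using hL)) hlen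
  have hM : ∀ t ∈ M, t.length ≤ N ∧ (s ++ t ∈ K ∨ s ++ t ∈ prCl K ∧ t.length = N) := by
    rintro t ⟨ht, hlen, htK | hteq⟩
    · exact ⟨hlen, Or.inl (supC_subset htK)⟩
    · exact ⟨hlen, Or.inr ⟨prCl_mono supC_subset ht, hteq⟩⟩
  exact prCl_mono (subset_fOptm hN hM hMc) (hext _ h hN)

/-- The continuations of `s` that the optimistic supervisor may let through: inside the
window they follow `pr(f^N_optm(s))`, beyond it they stay in `pr(K)`, and they stop at the
first string of `K_mc`. -/
def optmRun (K L : Set (List α)) (Suc : Set α) (N : ℕ) (s : List α) : Set (List α) :=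
  {y | ∃ w, s ++ w = y ∧ y ∈ prCl K ∧ w.take N ∈ prCl (fOptm K L Suc N s) ∧
    ∀ v, v <+: w → v ≠ [] → v ≠ w → s ++ v ∉ Kmc K L Suc}

theorem prefix_mem_union_optmRun (hs : s ∈ prCl (supC K L Suc)) {y q : List α}
    (hy : y ∈ prCl (supC K L Suc) ∪ optmRun K L Suc N s) (hq : q <+: y) :
    q ∈ prCl (supC K L Suc) ∪ optmRun K L Suc N s := by
  rcases hy with hy | ⟨w, rfl, hK, hM, hv⟩
  · exact Or.inl (mem_prCl_of_prefix hy hq)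
  rcases prefix_append_or hq with hqs | ⟨v, hvw, rfl⟩
  · exact Or.inl (mem_prCl_of_prefix hs hqs)
  refine Or.inr ⟨v, rfl, mem_prCl_of_prefix hK hq, mem_prCl_of_prefix hM (hvw.take N),
    fun v' hv'v hv' hne => hv v' (hv'v.trans hvw) hv' ?_⟩
  rintro rfl
  exact hne (hv'v.eq_of_length (le_antisymm hv'v.length_le hvw.length_le))

/-- A first crossing lies at most `N_mcfc̄ < N` steps after its last prefix in `K_mc ∪ {ε}`,
and for a crossing in the run that prefix is a prefix of `s`: so the crossing falls inside the
look-ahead window. -/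
theorem notMem_Kfc_of_mem_optmRun {n₀ : ℕ} (hn₀ : n₀ ∈ upperBounds (NmcfcSet K L Suc))
    (hN : n₀ < N) (hs : s ∈ prCl (supC K L Suc)) {y : List α}
    (hy : y ∈ prCl (supC K L Suc) ∪ optmRun K L Suc N s) : y ∉ Kfc K L Suc := by
  intro hyK
  obtain ⟨y', p, hy'y, hy', hpy', hp, hmem⟩ := exists_prefix_length_sub_mem_NmcfcSet hyK
  rcases prefix_mem_union_optmRun hs hy hy'y with hS | ⟨w, rfl, -, hM, hv⟩
  · exact notMem_Kfc_of_mem_prCl_supC hS hy'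
  have hps : p.length ≤ s.length := by
    by_contra! hlt
    obtain ⟨v, rfl⟩ := prefix_of_prefix_length_le (prefix_append s w) hpy' hlt.le
    have hp' : s ++ v ∈ Kmc K L Suc := hp.resolve_right fun h => by
      simp only [Set.mem_singleton_iff, append_eq_nil_iff] at h
      simp [h.2] at hlt
    exact hv v ((prefix_append_right_inj s).1 hpy') (by rintro rfl; simp at hlt)
      (by rintro rfl; exact notMem_Kfc_of_mem_Kmc hp' hy') hp'
  have hw : w.length < N := by
    have := hn₀ hmem
    simp only [length_append] at this
    omega
  rw [take_of_length_le hw.le] at hM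
  exact notMem_Kfc_of_mem_prCl_fOptm hM hw hy'

theorem append_mem_optmRun {y : List α} (hy : y ∈ optmRun K L Suc N s) (hy' : y ∉ Kfc K L Suc)
    {e : α} (he : e ∈ Suc) (hL : y ++ [e] ∈ L) : y ++ [e] ∈ optmRun K L Suc N s := by
  obtain ⟨w, rfl, hK, hM, hv⟩ := hy
  refine ⟨w ++ [e], by simp, ?_, ?_, ?_⟩
  · by_contra hout
    exact hy' ⟨hK, e, he, hL, hout⟩
  · rcases lt_or_ge w.length N with hlt | hge
    · rw [take_of_length_le hlt.le] at hM
      rw [take_of_length_le (by simp only [length_append, length_singleton]; omega)]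
      have hwe : w ++ [e] ∈ truncL (postL L s) N :=
        ⟨by simpa [postL] using hL, by simp only [length_append, length_singleton]; omega⟩
      exact ctrb_fOptm w hM e he hwe
    · rwa [take_append_of_le_length hge]
  · intro v hvwe hv0 hne
    rcases prefix_concat_iff.1 hvwe with rfl | hvw
    · exact absurd rfl hne
    by_cases hvw' : v = w
    · subst hvw'
      exact fun h => h.2.2 e he (by simpa using hL)
    · exact hv v hvw hv0 hvw'

theorem exists_mem_K_of_mem_optmRun {y : List α} (hy : y ∈ optmRun K L Suc N s) :
    ∃ m ∈ K ∩ optmRun K L Suc N s, y <+: m := by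
  obtain ⟨w, rfl, hK, hM, hv⟩ := hy
  obtain ⟨x, hwx, hxK, hxM⟩ :
      ∃ x, w <+: x ∧ s ++ x ∈ K ∧ x.take N ∈ prCl (fOptm K L Suc N s) := by
    rcases lt_or_ge w.length N with hlt | hge
    · rw [take_of_length_le hlt.le] at hM
      obtain ⟨t, htF, hwt⟩ := hM
      obtain ⟨htN, htK | ⟨⟨k, hk, r, rfl⟩, hteq⟩⟩ := of_mem_fOptm htF
      · exact ⟨t, hwt, htK, by rw [take_of_length_le htN]; exact subset_prCl _ htF⟩
      · refine ⟨t ++ r, hwt.trans (prefix_append _ _), by simpa using hk, ?_⟩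
        rw [take_append_of_le_length hteq.ge, take_of_length_le htN]
        exact subset_prCl _ htF
    · obtain ⟨k, hk, r, rfl⟩ := hK
      exact ⟨w ++ r, prefix_append _ _, by simpa using hk, by rwa [take_append_of_le_length hge]⟩
  obtain ⟨q, hyq, hqx, hq, hfirst⟩ := exists_first_prefix (P := (· ∈ Kmc K L Suc ∪ {s ++ x}))
    ((prefix_append_right_inj s).2 hwx) (Or.inr rfl)
  have hqK : q ∈ K := hq.elim (·.1) fun h => (Set.mem_singleton_iff.1 h) ▸ hxK
  obtain ⟨w', rfl⟩ := (prefix_append s w).trans hyq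
  have hww' := (prefix_append_right_inj s).1 hyq
  refine ⟨s ++ w', ⟨hqK, w', rfl, subset_prCl _ hqK,
    mem_prCl_of_prefix hxM (((prefix_append_right_inj s).1 hqx).take N), ?_⟩, hyq⟩
  intro v hvw' hv0 hne
  rcases le_or_gt w.length v.length with hle | hlt
  · have hwv := prefix_of_prefix_length_le hww' hvw' hle
    exact fun h => hfirst (s ++ v) ((prefix_append_right_inj s).2 hwv)
      ((prefix_append_right_inj s).2 hvw') (by simpa using hne) (Or.inl h)
  · exact hv v (prefix_of_prefix_length_le hvw' hww' hlt.le) hv0 (by rintro rfl; omega)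

theorem mem_prCl_supC_of_mem_prCl_fOptm {n₀ : ℕ} (hn₀ : n₀ ∈ upperBounds (NmcfcSet K L Suc))
    (hN : n₀ < N) (hs : s ∈ prCl (supC K L Suc)) {σ : α}
    (hσ : [σ] ∈ prCl (fOptm K L Suc N s)) : s ++ [σ] ∈ prCl (supC K L Suc) := by
  have hT : prCl (supC K L Suc) ∪ optmRun K L Suc N s ⊆ prCl (supC K L Suc) := by
    refine subset_prCl_supC (fun y hy q hq => prefix_mem_union_optmRun hs hy hq) ?_ ?_
    · rintro y (hy | hy) e he hL
      · exact Or.inl (ctrb_supC y hy e he hL)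
      · exact Or.inr (append_mem_optmRun hy (notMem_Kfc_of_mem_optmRun hn₀ hN hs (Or.inr hy))
          he hL)
    · rintro y (⟨m, hm, hym⟩ | hy)
      · exact ⟨m, ⟨supC_subset hm, Or.inl (subset_prCl _ hm)⟩, hym⟩
      · obtain ⟨m, ⟨hmK, hm⟩, hym⟩ := exists_mem_K_of_mem_optmRun hy
        exact ⟨m, ⟨hmK, Or.inr hm⟩, hym⟩
  refine hT (Or.inr ⟨[σ], rfl, (of_mem_prCl_fOptm hσ).1, ?_, fun v hv hv0 hne => ?_⟩)
  · rwa [take_of_length_le (by simp only [length_singleton]; omega)]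
  · refine absurd (hv.eq_of_length ?_) hne
    have := hv.length_le
    have := length_pos_iff.2 hv0
    simp only [length_singleton] at *
    omega

end Optimistic

theorem loopLang_policy_eq {α : Type*} {L S : Set (List α)} {Suc : Set α}
    {f : List α → Set (List α)} (hnil : [] ∈ S) (hpre : ∀ x σ, x ++ [σ] ∈ S → x ∈ S)
    (hSL : S ⊆ L) (hctrb : ∀ x ∈ S, ∀ σ ∈ Suc, x ++ [σ] ∈ L → x ++ [σ] ∈ S)
    (hsound : ∀ x ∈ S, ∀ σ, [σ] ∈ prCl (f x) → x ++ [σ] ∈ S)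
    (hcompl : ∀ x σ, x ++ [σ] ∈ S → [σ] ∈ prCl (f x)) :
    loopLang L (policy f L Suc) = S := by
  ext x
  constructor
  · intro hx
    induction hx with
    | nil => exact hnil
    | snoc _ hL hσ ih =>
      rcases hσ with hσ | ⟨hσ, -⟩
      · exact hsound _ ih _ hσ
      · exact hctrb _ ih _ hσ hL
  · intro hx
    induction x using List.reverseRecOn with
    | nil => exact InLoop.nil
    | append_singleton x σ ih =>
      exact InLoop.snoc (ih (hpre x σ hx)) (hSL hx) (Or.inl (hcompl x σ hx))

theorem optm_valid_caseII_general {α : Type*}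
    (Suc : Set α)
    (LG Lm K : Set (List α)) (hLG : LG = prCl Lm)
    (hKm : K ⊆ Lm)
    (hsup : (supC K LG Suc).Nonempty)
    (N : ℕ)
    (h : ∃ n, IsGreatest (NmcfcSet K LG Suc) n ∧ n + 1 ≤ N) :
    loopLang LG (γOptm K LG Suc N) = prCl (supC K LG Suc) := by
  obtain ⟨n₀, ⟨-, hn₀⟩, hN⟩ := h
  obtain ⟨m, hm⟩ := hsup
  have hSL : prCl (supC K LG Suc) ⊆ LG := hLG ▸ prCl_mono (supC_subset.trans hKm)
  exact loopLang_policy_eq ⟨m, hm, nil_prefix⟩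
    (fun x σ h => mem_prCl_of_prefix h (prefix_append x [σ])) hSL ctrb_supC
    (fun _ hx _ hσ => mem_prCl_supC_of_mem_prCl_fOptm hn₀ hN hx hσ)
    (fun _ _ h => singleton_mem_prCl_fOptm (by omega) h)

/-- Case II, optimistic attitude. If `K↑ ≠ ∅` and
`N ≥ N_mcfc̄ + 1`, then `L(G, γ^N_optm) = pr(K↑)`. -/
theorem optm_valid_caseII {α : Type*} [Fintype α]
    (Sc Suc : Set α) (hpart : Sc ∪ Suc = Set.univ) (hdisj : Disjoint Sc Suc)
    (LG Lm K : Set (List α)) (hLG : LG = prCl Lm)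
    (hKm : K ⊆ Lm) (hKcl : K = prCl K ∩ Lm)
    (hsup : (supC K LG Suc).Nonempty)
    (N : ℕ)
    (h : ∃ n, IsGreatest (NmcfcSet K LG Suc) n ∧ n + 1 ≤ N) :
    loopLang LG (γOptm K LG Suc N) = prCl (supC K LG Suc) :=
  optm_valid_caseII_general Suc LG Lm K hLG hKm hsup N h
end
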